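/- Let $n\ge 1$ be an integer, let $\zeta = e^{2\pi i/n}$, and for $0\le u, v < n$ with $nu+v \le n^2-1$ define $c_{nu+v} = \sum_{0\le m, m+nu+v < n^2} b_m \overline{b_{m+nu+v}}$ where $b_{nj+k} = \zeta^{jk}$ for $0\le j,k < n$ are the coefficients of $h_n$. Then for every integer $u$ with $1\le u\le n-1$, one has $c_{nu} = 0$. -/

import Mathlib

/-!
Write `m = nj + k`. Shifting by `nu` keeps `k` and replaces `j` by `j + u`, so
`b_m conj(b_{m+nu}) = ζ^{jk} conj(ζ)^{(j+u)k} = conj(ζ)^{uk}` depends only on `k = m mod n`.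
The `n(n-u)` terms of `c_{nu}` thus run `n - u` times through the geometric sum of
`conj(ζ)^u`, an `n`-th root of unity different from `1`, and that sum vanishes.
-/

/-- The coefficients of `h_n`: `b_{nj+k} = ζ^{jk}` with `ζ = e^{2πi/n}`, for `0 ≤ j,k < n`;
here `j = m / n` and `k = m % n` for an index `m = nj + k`. -/
noncomputable def hCoef (n : ℕ) (m : ℕ) : ℂ :=
  Complex.exp (2 * Real.pi * Complex.I / n) ^ ((m / n) * (m % n))

/-- The aperiodic autocorrelations `c_u = ∑_{0 ≤ m, m+u < n²} b_m conj(b_{m+u})` of the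
coefficient sequence of `h_n` (this is `0` for `u ≥ n²`). -/
noncomputable def hCorr (n : ℕ) (u : ℕ) : ℂ :=
  ∑ m ∈ Finset.range (n ^ 2 - u), hCoef n m * (starRingEnd ℂ) (hCoef n (m + u))

open Finset ComplexConjugate

theorem Finset.sum_range_mul_mod {M : Type*} [AddCommMonoid M] (f : ℕ → M) (n t : ℕ) :
    ∑ m ∈ range (n * t), f (m % n) = t • ∑ k ∈ range n, f k := by
  induction t with
  | zero => simp
  | succ t ih =>
    rw [Nat.mul_succ, sum_range_add, ih, succ_nsmul]
    congr 1
    exact sum_congr rfl fun k hk => by rw [Nat.mul_add_mod, Nat.mod_eq_of_lt (mem_range.mp hk)]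

theorem geom_sum_eq_zero_of_pow_eq_one {K : Type*} [DivisionRing K] {w : K} {n : ℕ}
    (hwn : w ^ n = 1) (hw1 : w ≠ 1) : ∑ k ∈ range n, w ^ k = 0 := by
  rw [geom_sum_eq hw1, hwn, sub_self, zero_div]

theorem Complex.pow_mul_mul_conj_pow_add_mul {z : ℂ} (hz : ‖z‖ = 1) (j k u : ℕ) :
    z ^ (j * k) * conj (z ^ ((j + u) * k)) = (conj z ^ u) ^ k := by
  have hz0 : z ≠ 0 := norm_ne_zero_iff.mp (hz ▸ one_ne_zero)
  rw [map_pow, ← inv_eq_conj hz, add_mul, pow_add, ← mul_assoc, inv_pow z (j * k),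
    mul_inv_cancel₀ (pow_ne_zero _ hz0), one_mul, ← pow_mul, mul_comm u k]

theorem hCoef_mul_conj_hCoef_add_mul {n : ℕ} (hn : 0 < n) (m u : ℕ) :
    hCoef n m * conj (hCoef n (m + n * u)) =
      (conj (Complex.exp (2 * Real.pi * Complex.I / n)) ^ u) ^ (m % n) := by
  rw [hCoef, hCoef, Nat.add_mul_div_left _ _ hn, Nat.add_mul_mod_self_left]
  exact Complex.pow_mul_mul_conj_pow_add_mul
    ((Complex.isPrimitiveRoot_exp n hn.ne').norm'_eq_one hn.ne') _ _ _

theorem hCorr_mul_eq_nsmul_geom_sum {n : ℕ} (hn : 0 < n) (u : ℕ) :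
    hCorr n (n * u) =
      (n - u) • ∑ k ∈ range n, (conj (Complex.exp (2 * Real.pi * Complex.I / n)) ^ u) ^ k := by
  rw [hCorr, sum_congr rfl fun m _ => hCoef_mul_conj_hCoef_add_mul hn m u, sq, ← Nat.mul_sub,
    sum_range_mul_mod]

theorem hCorr_mul_eq_zero_general (n : ℕ) (u : ℕ) (hu1 : 1 ≤ u) (hu2 : u ≤ n - 1) :
    hCorr n (n * u) = 0 := by
  have hn : 0 < n := by omega
  have hprim : IsPrimitiveRoot (conj (Complex.exp (2 * Real.pi * Complex.I / n))) n :=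
    (Complex.isPrimitiveRoot_exp n hn.ne').map_of_injective (starRingEnd ℂ).injective
  rw [hCorr_mul_eq_nsmul_geom_sum hn, geom_sum_eq_zero_of_pow_eq_one, smul_zero]
  · rw [pow_right_comm, hprim.pow_eq_one, one_pow]
  · exact hprim.pow_ne_one_of_pos_of_lt (by omega) (by omega)

/-- For `1 ≤ u ≤ n-1`, the autocorrelation `c_{nu}` of `h_n` vanishes. -/
theorem hCorr_mul_eq_zero (n : ℕ) (hn : 1 ≤ n) (u : ℕ) (hu1 : 1 ≤ u) (hu2 : u ≤ n - 1) :
    hCorr n (n * u) = 0 :=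
  hCorr_mul_eq_zero_general n u hu1 hu2
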